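/- arXiv:2008.02035 — 2 statements merged into one kernel-verified Lean document; each statement's English description precedes it below -/
import Mathlib

section
/- Series composition recurrence: Let the series-parallel digraph G_v be the series composition of G_x and G_y (target of G_x identified with origin of G_y). The restricted robust flow problem on G_v with supply s~_v and budget c~_v is feasible if and only if there exist budgets c~_x, c~_y with c~_v = c~_x + c~_y such that the restricted problem on G_x with supply s~_x = s~_v and budget c~_x is feasible and the restricted problem on G_y with supply s~_y = s~_x + beta and budget c~_y is feasible, where beta^lambda = sum over vertices w of G_x other than its origin of b^lambda(w). -/
open Finset

structure Net (V A : Type) where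
  src : A → V
  dst : A → V
  isFixed : A → Bool
  u : A → ℤ
  c : A → ℤ

variable {V A : Type} [Fintype V] [Fintype A] [DecidableEq V]

def excess (N : Net V A) (f : A → ℤ) (v : V) : ℤ :=
  ∑ a ∈ univ.filter (fun a => N.src a = v), f a -
    ∑ a ∈ univ.filter (fun a => N.dst a = v), f a

def cost (N : Net V A) (f : A → ℤ) : ℤ := ∑ a, N.c a * f a

/-- A vertex is incident to the (sub)graph if some arc starts or ends there. -/
def Incident (N : Net V A) (v : V) : Prop := ∃ a, N.src a = v ∨ N.dst a = v

instance (N : Net V A) (v : V) : Decidable (Incident N v) :=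
  inferInstanceAs (Decidable (∃ a, N.src a = v ∨ N.dst a = v))

/-- The `(st, ct)`-restricted robust minimum cost flow problem on a subgraph with
origin `o` and target `q` is feasible (demand label `0`): there are integral scenario
flows within capacities, agreeing on fixed arcs, with excess `st^λ` at the origin and
excess `b^λ(w)` at every other vertex of the subgraph except the target, whose
scenario costs exactly meet the budgets `ct^λ`. -/
def RestFeasible {Λ : Type} (N : Net V A) (o q : V) (b : Λ → V → ℤ)
    (st ct : Λ → ℤ) : Prop :=
  ∃ f : Λ → A → ℤ,
    (∀ lam a, 0 ≤ f lam a ∧ f lam a ≤ N.u a) ∧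
    (∀ lam lam' a, N.isFixed a = true → f lam a = f lam' a) ∧
    (∀ lam, excess N (f lam) o = st lam) ∧
    (∀ lam v, v ≠ o → v ≠ q → Incident N v → excess N (f lam) v = b lam v) ∧
    (∀ lam, cost N (f lam) = ct lam)

def combineNet {Ax Ay : Type} (Nx : Net V Ax) (Ny : Net V Ay) : Net V (Ax ⊕ Ay) where
  src := Sum.elim Nx.src Ny.src
  dst := Sum.elim Nx.dst Ny.dst
  isFixed := Sum.elim Nx.isFixed Ny.isFixed
  u := Sum.elim Nx.u Ny.u
  c := Sum.elim Nx.c Ny.c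

/-! Every arc leaves one vertex and enters one, so the excesses of a flow sum to zero; hence on a
subgraph whose non-target vertices all have prescribed excess, the excess at the target is forced.
In a series composition the two halves share only the cut vertex `w`, so the conditions on
`G_v` split into those on `G_x` and `G_y`, except at `w`, where the forced excess of `G_x` is
`b(w) - (st + β)`; the balance `b(w)` required in `G_v` thus leaves exactly `st + β` for `G_y`. -/

lemma sum_excess_eq_zero (N : Net V A) (f : A → ℤ) : ∑ v, excess N f v = 0 := by
  unfold excess
  rw [sum_sub_distrib, sum_fiberwise, sum_fiberwise, sub_self]

omit [Fintype V] in
lemma excess_eq_zero_of_not_incident (N : Net V A) (f : A → ℤ) {v : V} (h : ¬ Incident N v) :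
    excess N f v = 0 := by
  have hsrc : univ.filter (fun a => N.src a = v) = ∅ :=
    filter_eq_empty_iff.mpr fun a _ ha => h ⟨a, Or.inl ha⟩
  have hdst : univ.filter (fun a => N.dst a = v) = ∅ :=
    filter_eq_empty_iff.mpr fun a _ ha => h ⟨a, Or.inr ha⟩
  simp [excess, hsrc, hdst]

lemma excess_target_add_sum (N : Net V A) {o w : V} (how : o ≠ w) {f : A → ℤ} {b : V → ℤ}
    {s : ℤ} (ho : excess N f o = s)
    (hb : ∀ v, v ≠ o → v ≠ w → Incident N v → excess N f v = b v) :
    excess N f w + (s + ∑ v ∈ univ.filter (fun v => v ≠ o ∧ (Incident N v ∨ v = w)), b v)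
      = b w := by
  set S := univ.filter (fun v => v ≠ o ∧ (Incident N v ∨ v = w))
  have hsplit : ∀ v, excess N f v = (if v = o then s else 0) + (if v ∈ S then b v else 0)
      + (if v = w then excess N f w - b w else 0) := by
    intro v
    rcases eq_or_ne v o with rfl | hvo
    · simp [S, how, ho]
    rcases eq_or_ne v w with rfl | hvw
    · simp [S, hvo]
    by_cases hv : Incident N v
    · simp [S, hvo, hvw, hv, hb v hvo hvw hv]
    · simp [S, hvo, hvw, hv, excess_eq_zero_of_not_incident N f hv]
  have hzero := sum_excess_eq_zero N f
  rw [sum_congr rfl fun v _ => hsplit v] at hzero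
  simp only [sum_add_distrib, sum_ite_eq', mem_univ, if_true, sum_ite_mem, univ_inter] at hzero
  linarith

section Series

variable {Ax Ay : Type} (Nx : Net V Ax) (Ny : Net V Ay)

omit [Fintype V] [DecidableEq V] in
lemma incident_combineNet (v : V) :
    Incident (combineNet Nx Ny) v ↔ Incident Nx v ∨ Incident Ny v := by
  simp only [Incident, combineNet, Sum.exists, Sum.elim_inl, Sum.elim_inr]

variable [Fintype Ax] [Fintype Ay]

omit [Fintype V] in
lemma excess_combineNet (fx : Ax → ℤ) (fy : Ay → ℤ) (v : V) :
    excess (combineNet Nx Ny) (Sum.elim fx fy) v = excess Nx fx v + excess Ny fy v := by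
  simp only [excess, sum_filter, Fintype.sum_sum_type]
  -- not `ring`: the `if`s on the left keep the decidability instances of `Sum.elim _ _ (.inl a) = v`
  exact add_sub_add_comm _ _ _ _

omit [Fintype V] [DecidableEq V] in
lemma cost_combineNet (fx : Ax → ℤ) (fy : Ay → ℤ) :
    cost (combineNet Nx Ny) (Sum.elim fx fy) = cost Nx fx + cost Ny fy := by
  simp [cost, combineNet, Fintype.sum_sum_type]

lemma excess_conditions_series_iff {o w q : V} (how : o ≠ w) (hwq : w ≠ q)
    (hcut : ∀ v, Incident Nx v → Incident Ny v → v = w)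
    (hoNy : ¬ Incident Ny o) (hqNx : ¬ Incident Nx q) (hwNy : Incident Ny w)
    (b : V → ℤ) (s β : ℤ)
    (hβ : β = ∑ v ∈ univ.filter (fun v => v ≠ o ∧ (Incident Nx v ∨ v = w)), b v)
    (fx : Ax → ℤ) (fy : Ay → ℤ) :
    (excess (combineNet Nx Ny) (Sum.elim fx fy) o = s ∧
      ∀ v, v ≠ o → v ≠ q → Incident (combineNet Nx Ny) v →
        excess (combineNet Nx Ny) (Sum.elim fx fy) v = b v) ↔
    (excess Nx fx o = s ∧ ∀ v, v ≠ o → v ≠ w → Incident Nx v → excess Nx fx v = b v) ∧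
    (excess Ny fy w = s + β ∧ ∀ v, v ≠ w → v ≠ q → Incident Ny v → excess Ny fy v = b v) := by
  simp only [excess_combineNet, incident_combineNet, excess_eq_zero_of_not_incident Ny fy hoNy,
    add_zero]
  have only_x : ∀ v, v ≠ w → Incident Nx v → excess Ny fy v = 0 := fun v hvw hx =>
    excess_eq_zero_of_not_incident Ny fy fun hy => hvw (hcut v hx hy)
  have only_y : ∀ v, v ≠ w → Incident Ny v → excess Nx fx v = 0 := fun v hvw hy =>
    excess_eq_zero_of_not_incident Nx fx fun hx => hvw (hcut v hx hy)
  have hoy : ∀ {v}, Incident Ny v → v ≠ o := fun hy hvo => hoNy (hvo ▸ hy)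
  have hqx : ∀ {v}, Incident Nx v → v ≠ q := fun hx hvq => hqNx (hvq ▸ hx)
  constructor
  · rintro ⟨ho, hb⟩
    have hbx : ∀ v, v ≠ o → v ≠ w → Incident Nx v → excess Nx fx v = b v := fun v hvo hvw hx => by
      simpa [only_x v hvw hx] using hb v hvo (hqx hx) (Or.inl hx)
    have hw := hb w how.symm hwq (Or.inr hwNy)
    have htarget := excess_target_add_sum Nx how ho hbx
    refine ⟨⟨ho, hbx⟩, by linarith, fun v hvw hvq hy => ?_⟩
    simpa [only_y v hvw hy] using hb v (hoy hy) hvq (Or.inr hy)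
  · rintro ⟨⟨ho, hbx⟩, hw, hby⟩
    refine ⟨ho, fun v hvo hvq hv => ?_⟩
    rcases eq_or_ne v w with rfl | hvw
    · linarith [excess_target_add_sum Nx how ho hbx]
    rcases hv with hx | hy
    · rw [hbx v hvo hvw hx, only_x v hvw hx, add_zero]
    · rw [hby v hvw hvq hy, only_y v hvw hy, zero_add]

end Series

theorem dp_series_recurrence_general {Ax Ay Λ : Type} [Fintype Ax] [Fintype Ay]
    (Nx : Net V Ax) (Ny : Net V Ay) (o w q : V)
    (how : o ≠ w) (hwq : w ≠ q)
    (hcut : ∀ v, Incident Nx v → Incident Ny v → v = w)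
    (hoNy : ¬ Incident Ny o) (hqNx : ¬ Incident Nx q) (hwNy : Incident Ny w)
    (b : Λ → V → ℤ) (st ct : Λ → ℤ) (β : Λ → ℤ)
    (hβ : ∀ lam, β lam
      = ∑ v ∈ univ.filter (fun v => v ≠ o ∧ (Incident Nx v ∨ v = w)), b lam v) :
    RestFeasible (combineNet Nx Ny) o q b st ct ↔
      ∃ cx cy : Λ → ℤ,
        (∀ lam, ct lam = cx lam + cy lam) ∧
        RestFeasible Nx o w b st cx ∧
        RestFeasible Ny w q b (fun lam => st lam + β lam) cy := by
  have hsplit lam := excess_conditions_series_iff Nx Ny how hwq hcut hoNy hqNx hwNy (b lam)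
    (st lam) (β lam) (hβ lam)
  constructor
  · rintro ⟨f, hcap, hfix, ho, hb, hc⟩
    obtain ⟨fx, fy, rfl⟩ : ∃ (fx : Λ → Ax → ℤ) (fy : Λ → Ay → ℤ),
        f = fun lam => Sum.elim (fx lam) (fy lam) :=
      ⟨_, _, funext fun lam => (Sum.elim_comp_inl_inr (f lam)).symm⟩
    have hxy lam := (hsplit lam (fx lam) (fy lam)).mp ⟨ho lam, hb lam⟩
    refine ⟨fun lam => cost Nx (fx lam), fun lam => cost Ny (fy lam),
      fun lam => by rw [← hc lam, cost_combineNet],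
      ⟨fx, fun lam a => hcap lam (.inl a), fun lam lam' a => hfix lam lam' (.inl a),
        fun lam => (hxy lam).1.1, fun lam => (hxy lam).1.2, fun _ => rfl⟩,
      ⟨fy, fun lam a => hcap lam (.inr a), fun lam lam' a => hfix lam lam' (.inr a),
        fun lam => (hxy lam).2.1, fun lam => (hxy lam).2.2, fun _ => rfl⟩⟩
  · rintro ⟨cx, cy, hct, ⟨fx, hcapx, hfixx, hox, hbx, hcx⟩, ⟨fy, hcapy, hfixy, hoy, hby, hcy⟩⟩
    have hxy lam := (hsplit lam (fx lam) (fy lam)).mpr ⟨⟨hox lam, hbx lam⟩, hoy lam, hby lam⟩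
    refine ⟨fun lam => Sum.elim (fx lam) (fy lam), fun lam => Sum.rec (hcapx lam) (hcapy lam),
      fun lam lam' => Sum.rec (hfixx lam lam') (hfixy lam lam'), fun lam => (hxy lam).1,
      fun lam => (hxy lam).2, fun lam => ?_⟩
    rw [cost_combineNet, hcx, hcy, hct]

/-- Lemma 6 of the paper, series composition recurrence: if `G_v` is the
series composition of `G_x` (origin `o`, target `w`) and `G_y` (origin `w`, target `q`),
then the restricted problem on `G_v` with supplies `st` and budgets `ct` is feasible
iff the budget can be split as `ct = cx + cy` so that the restricted problem on `G_x`
with supplies `st` and budgets `cx` and the restricted problem on `G_y` with supplies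
`st + β` and budgets `cy` are feasible, where `β^λ` is the sum of the balances
`b^λ` over the vertices of `G_x` other than its origin. -/
theorem dp_series_recurrence {Ax Ay Λ : Type} [Fintype Ax] [Fintype Ay]
    (Nx : Net V Ax) (Ny : Net V Ay) (o w q : V)
    (how : o ≠ w) (hwq : w ≠ q) (hoq : o ≠ q)
    (hcut : ∀ v, Incident Nx v → Incident Ny v → v = w)
    (hoNy : ¬ Incident Ny o) (hqNx : ¬ Incident Nx q) (hwNy : Incident Ny w)
    (b : Λ → V → ℤ) (st ct : Λ → ℤ) (β : Λ → ℤ)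
    (hβ : ∀ lam, β lam
      = ∑ v ∈ univ.filter (fun v => v ≠ o ∧ (Incident Nx v ∨ v = w)), b lam v) :
    RestFeasible (combineNet Nx Ny) o q b st ct ↔
      ∃ cx cy : Λ → ℤ,
        (∀ lam, ct lam = cx lam + cy lam) ∧
        RestFeasible Nx o w b st cx ∧
        RestFeasible Ny w q b (fun lam => st lam + β lam) cy :=
  dp_series_recurrence_general Nx Ny o w q how hwq hcut hoNy hqNx hwNy b st ct β hβ
end

section
/- For a two-scenario robust flow instance on a series-parallel digraph with unique source at the origin and unique sink at the target and demands d^1 <= d^2, there exists an optimal integral robust b-flow f = (f^1, f^2) whose cost is attained by the second (larger-demand) scenario: c(f) = max{c(f^1), c(f^2)} = c(f^2). -/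
open Finset

/-- Syntax trees of series-parallel digraphs: a single arc (with a flag marking it as
a fixed arc, a capacity and a cost), or a series or parallel composition. -/
inductive SPD : Type where
  | arc (isFixed : Bool) (u c : ℤ) : SPD
  | series (g₁ g₂ : SPD) : SPD
  | parallel (g₁ g₂ : SPD) : SPD

namespace SPD

/-- Interior vertices (all vertices except origin and target). -/
def Inner : SPD → Type
  | arc _ _ _ => Empty
  | series g₁ g₂ => (g₁.Inner ⊕ g₂.Inner) ⊕ Unit
  | parallel g₁ g₂ => g₁.Inner ⊕ g₂.Inner

/-- Vertices: interior vertices plus the origin (`Sum.inr false`) and the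
target (`Sum.inr true`). -/
def Vert (g : SPD) : Type := g.Inner ⊕ Bool

def Arcs : SPD → Type
  | arc _ _ _ => Unit
  | series g₁ g₂ => g₁.Arcs ⊕ g₂.Arcs
  | parallel g₁ g₂ => g₁.Arcs ⊕ g₂.Arcs

def origin (g : SPD) : g.Vert := Sum.inr false
def target (g : SPD) : g.Vert := Sum.inr true

def innerFintype : (g : SPD) → Fintype g.Inner
  | arc _ _ _ => inferInstanceAs (Fintype Empty)
  | series g₁ g₂ =>
      letI := g₁.innerFintype; letI := g₂.innerFintype
      inferInstanceAs (Fintype ((g₁.Inner ⊕ g₂.Inner) ⊕ Unit))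
  | parallel g₁ g₂ =>
      letI := g₁.innerFintype; letI := g₂.innerFintype
      inferInstanceAs (Fintype (g₁.Inner ⊕ g₂.Inner))

instance (g : SPD) : Fintype g.Inner := g.innerFintype

def innerDecEq : (g : SPD) → DecidableEq g.Inner
  | arc _ _ _ => inferInstanceAs (DecidableEq Empty)
  | series g₁ g₂ =>
      letI := g₁.innerDecEq; letI := g₂.innerDecEq
      inferInstanceAs (DecidableEq ((g₁.Inner ⊕ g₂.Inner) ⊕ Unit))
  | parallel g₁ g₂ =>
      letI := g₁.innerDecEq; letI := g₂.innerDecEq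
      inferInstanceAs (DecidableEq (g₁.Inner ⊕ g₂.Inner))

instance (g : SPD) : DecidableEq g.Inner := g.innerDecEq
instance (g : SPD) : Fintype g.Vert := inferInstanceAs (Fintype (g.Inner ⊕ Bool))
instance (g : SPD) : DecidableEq g.Vert := inferInstanceAs (DecidableEq (g.Inner ⊕ Bool))

def arcsFintype : (g : SPD) → Fintype g.Arcs
  | arc _ _ _ => inferInstanceAs (Fintype Unit)
  | series g₁ g₂ =>
      letI := g₁.arcsFintype; letI := g₂.arcsFintype
      inferInstanceAs (Fintype (g₁.Arcs ⊕ g₂.Arcs))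
  | parallel g₁ g₂ =>
      letI := g₁.arcsFintype; letI := g₂.arcsFintype
      inferInstanceAs (Fintype (g₁.Arcs ⊕ g₂.Arcs))

instance (g : SPD) : Fintype g.Arcs := g.arcsFintype

def arcsDecEq : (g : SPD) → DecidableEq g.Arcs
  | arc _ _ _ => inferInstanceAs (DecidableEq Unit)
  | series g₁ g₂ =>
      letI := g₁.arcsDecEq; letI := g₂.arcsDecEq
      inferInstanceAs (DecidableEq (g₁.Arcs ⊕ g₂.Arcs))
  | parallel g₁ g₂ =>
      letI := g₁.arcsDecEq; letI := g₂.arcsDecEq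
      inferInstanceAs (DecidableEq (g₁.Arcs ⊕ g₂.Arcs))

instance (g : SPD) : DecidableEq g.Arcs := g.arcsDecEq

/-- Embedding of the vertices of the first factor into a series composition:
the target of `g₁` becomes the merged middle vertex. -/
def vmapS₁ (g₁ g₂ : SPD) : g₁.Vert → (series g₁ g₂).Vert
  | Sum.inl x => Sum.inl (Sum.inl (Sum.inl x))
  | Sum.inr false => Sum.inr false
  | Sum.inr true => Sum.inl (Sum.inr ())

def vmapS₂ (g₁ g₂ : SPD) : g₂.Vert → (series g₁ g₂).Vert
  | Sum.inl x => Sum.inl (Sum.inl (Sum.inr x))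
  | Sum.inr false => Sum.inl (Sum.inr ())
  | Sum.inr true => Sum.inr true

def vmapP₁ (g₁ g₂ : SPD) : g₁.Vert → (parallel g₁ g₂).Vert
  | Sum.inl x => Sum.inl (Sum.inl x)
  | Sum.inr b => Sum.inr b

def vmapP₂ (g₁ g₂ : SPD) : g₂.Vert → (parallel g₁ g₂).Vert
  | Sum.inl x => Sum.inl (Sum.inr x)
  | Sum.inr b => Sum.inr b

def src : (g : SPD) → g.Arcs → g.Vert
  | arc _ _ _, _ => Sum.inr false
  | series g₁ g₂, Sum.inl a => vmapS₁ g₁ g₂ (g₁.src a)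
  | series g₁ g₂, Sum.inr a => vmapS₂ g₁ g₂ (g₂.src a)
  | parallel g₁ g₂, Sum.inl a => vmapP₁ g₁ g₂ (g₁.src a)
  | parallel g₁ g₂, Sum.inr a => vmapP₂ g₁ g₂ (g₂.src a)

def dst : (g : SPD) → g.Arcs → g.Vert
  | arc _ _ _, _ => Sum.inr true
  | series g₁ g₂, Sum.inl a => vmapS₁ g₁ g₂ (g₁.dst a)
  | series g₁ g₂, Sum.inr a => vmapS₂ g₁ g₂ (g₂.dst a)
  | parallel g₁ g₂, Sum.inl a => vmapP₁ g₁ g₂ (g₁.dst a)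
  | parallel g₁ g₂, Sum.inr a => vmapP₂ g₁ g₂ (g₂.dst a)

def cap : (g : SPD) → g.Arcs → ℤ
  | arc _ u _, _ => u
  | series g₁ _, Sum.inl a => g₁.cap a
  | series _ g₂, Sum.inr a => g₂.cap a
  | parallel g₁ _, Sum.inl a => g₁.cap a
  | parallel _ g₂, Sum.inr a => g₂.cap a

def cost : (g : SPD) → g.Arcs → ℤ
  | arc _ _ c, _ => c
  | series g₁ _, Sum.inl a => g₁.cost a
  | series _ g₂, Sum.inr a => g₂.cost a
  | parallel g₁ _, Sum.inl a => g₁.cost a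
  | parallel _ g₂, Sum.inr a => g₂.cost a

def fixedArc : (g : SPD) → g.Arcs → Bool
  | arc b _ _, _ => b
  | series g₁ _, Sum.inl a => g₁.fixedArc a
  | series _ g₂, Sum.inr a => g₂.fixedArc a
  | parallel g₁ _, Sum.inl a => g₁.fixedArc a
  | parallel _ g₂, Sum.inr a => g₂.fixedArc a

/-- Net outflow minus inflow of an integral flow at a vertex. -/
def excess (g : SPD) (f : g.Arcs → ℤ) (v : g.Vert) : ℤ :=
  ∑ a ∈ univ.filter (fun a => g.src a = v), f a -
    ∑ a ∈ univ.filter (fun a => g.dst a = v), f a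

def IsFlow (g : SPD) (b : g.Vert → ℤ) (f : g.Arcs → ℤ) : Prop :=
  (∀ a, 0 ≤ f a ∧ f a ≤ g.cap a) ∧ ∀ v, g.excess f v = b v

def flowCost (g : SPD) (f : g.Arcs → ℤ) : ℤ := ∑ a, g.cost a * f a

/-- Balances of a unique source (the origin) / unique sink (the target) instance
with demand `d`. -/
def bal (g : SPD) (d : ℤ) : g.Vert → ℤ :=
  fun v => if v = g.origin then d else if v = g.target then -d else 0

/-- A two-scenario integral robust `b`-flow with demands `d₁`, `d₂` from the origin
to the target: both scenario flows are feasible and they agree on all fixed arcs. -/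
def IsRobust2 (g : SPD) (d₁ d₂ : ℤ) (f₁ f₂ : g.Arcs → ℤ) : Prop :=
  g.IsFlow (g.bal d₁) f₁ ∧ g.IsFlow (g.bal d₂) f₂ ∧
    ∀ a, g.fixedArc a = true → f₁ a = f₂ a

/-- Cost of a two-scenario robust flow: the maximum scenario cost. -/
def rcost (g : SPD) (f₁ f₂ : g.Arcs → ℤ) : ℤ := max (g.flowCost f₁) (g.flowCost f₂)

/-- Optimality: minimum cost among all integral robust flows for the same demands. -/
def Optimal (g : SPD) (d₁ d₂ : ℤ) (f₁ f₂ : g.Arcs → ℤ) : Prop :=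
  g.IsRobust2 d₁ d₂ f₁ f₂ ∧
    ∀ h₁ h₂, g.IsRobust2 d₁ d₂ h₁ h₂ → g.rcost f₁ f₂ ≤ g.rcost h₁ h₂

/-- Nonnegative capacities and costs. -/
def nonnegData (g : SPD) : Prop := ∀ a, 0 ≤ g.cap a ∧ 0 ≤ g.cost a

end SPD

/-!
Let `(f₁, f₂)` be an optimal robust flow; one exists because the feasible flows form a finite
set. On a series-parallel digraph, if `f` is a flow of value `D` and `h` a flow of value `d`
agreeing with `f` on the fixed arcs, then every value `e` between `min d D` and `D` is the
value of a flow `k ≤ f` agreeing with `f` on the fixed arcs. This goes by induction on the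
decomposition: series compositions carry the same value through both parts, and in a
parallel composition `e` can be split so that each branch share again lies in the admissible
range of that branch. Taking `e = d₁` replaces `f₁` by such a `k ≤ f₂`; as costs are
nonnegative, `c(k) ≤ c(f₂)`, so the robust cost of `(k, f₂)` is `c(f₂) ≤ max(c(f₁), c(f₂))`.
-/

theorem sum_ite_comp_eq_sum_fiberwise {α U V M : Type*} [Fintype α] [Fintype U] [DecidableEq U]
    [DecidableEq V] [AddCommMonoid M] (s : α → U) (φ : U → V) (f : α → M) (v : V) :
    (∑ a, if φ (s a) = v then f a else 0) =
      ∑ u, if φ u = v then ∑ a, (if s a = u then f a else 0) else 0 := by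
  simp_rw [ite_sum_zero]
  rw [sum_comm]
  refine sum_congr rfl fun a _ => ?_
  rw [Fintype.sum_eq_single (s a) fun u hu => by simp [Ne.symm hu]]
  simp

theorem sum_ite_apply_eq_of_injective {U V M : Type*} [Fintype U] [DecidableEq V]
    [AddCommMonoid M] {φ : U → V} (hφ : φ.Injective) (F : U → M) (u₀ : U) :
    (∑ u, if φ u = φ u₀ then F u else 0) = F u₀ := by
  rw [Fintype.sum_eq_single u₀ fun u hu => if_neg (hφ.ne hu), if_pos rfl]

theorem sum_ite_eq_zero_of_forall_ne {U V M : Type*} [Fintype U] [AddCommMonoid M] {φ : U → V}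
    {v : V} [DecidablePred (φ · = v)] (hv : ∀ u, φ u ≠ v) (F : U → M) :
    (∑ u, if φ u = v then F u else 0) = 0 := by
  simp [hv]

namespace SPD

section Excess

lemma excess_eq_sum_ite (g : SPD) (f : g.Arcs → ℤ) (v : g.Vert) :
    g.excess f v =
      (∑ a, if g.src a = v then f a else 0) - ∑ a, if g.dst a = v then f a else 0 := by
  simp only [excess, sum_filter]

lemma sum_excess_eq_zero (g : SPD) (f : g.Arcs → ℤ) : ∑ v, g.excess f v = 0 := by
  simp only [excess_eq_sum_ite, sum_sub_distrib]
  rw [sum_comm, sum_comm (f := fun v a => if g.dst a = v then f a else 0)]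
  simp

lemma sum_vert (g : SPD) (F : g.Vert → ℤ) :
    ∑ v, F v = ∑ x, F (.inl x) + (F g.origin + F g.target) :=
  (Fintype.sum_sum_type F).trans (congrArg _ ((Fintype.sum_bool _).trans (add_comm _ _)))

lemma sum_ite_map_excess {V : Type*} [DecidableEq V] (g : SPD) (φ : g.Vert → V)
    (f : g.Arcs → ℤ) (v : V) :
    (∑ u, if φ u = v then g.excess f u else 0) =
      (∑ a, if φ (g.src a) = v then f a else 0) - ∑ a, if φ (g.dst a) = v then f a else 0 := by
  rw [sum_ite_comp_eq_sum_fiberwise g.src, sum_ite_comp_eq_sum_fiberwise g.dst, ← sum_sub_distrib]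
  refine sum_congr rfl fun u _ => ?_
  rw [excess_eq_sum_ite, ite_sub_ite, sub_self]

-- The `Fintype` instances on `Arcs` are built by recursion on the digraph, so the generic sum
-- lemmas only apply after unfolding them; these restate them at the three shapes.
lemma sum_arcs_arc (b : Bool) (u c : ℤ) (F : (arc b u c).Arcs → ℤ) : ∑ a, F a = F () :=
  Fintype.sum_unique (ι := Unit) F

variable (g₁ g₂ : SPD)

lemma sum_arcs_series (F : (series g₁ g₂).Arcs → ℤ) :
    ∑ a, F a = ∑ a, F (.inl a) + ∑ a, F (.inr a) :=
  Fintype.sum_sum_type F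

lemma sum_arcs_parallel (F : (parallel g₁ g₂).Arcs → ℤ) :
    ∑ a, F a = ∑ a, F (.inl a) + ∑ a, F (.inr a) :=
  Fintype.sum_sum_type F

lemma vmapS₁_injective : (vmapS₁ g₁ g₂).Injective := by
  rintro (x | _ | _) (y | _ | _) h <;> cases h <;> rfl

lemma vmapS₂_injective : (vmapS₂ g₁ g₂).Injective := by
  rintro (x | _ | _) (y | _ | _) h <;> cases h <;> rfl

lemma vmapP₁_injective : (vmapP₁ g₁ g₂).Injective := by
  rintro (x | _) (y | _) h <;> cases h <;> rfl

lemma vmapP₂_injective : (vmapP₂ g₁ g₂).Injective := by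
  rintro (x | _) (y | _) h <;> cases h <;> rfl

lemma excess_series (f : (series g₁ g₂).Arcs → ℤ) (v : (series g₁ g₂).Vert) :
    (series g₁ g₂).excess f v =
      (∑ u, if vmapS₁ g₁ g₂ u = v then g₁.excess (fun a => f (.inl a)) u else 0) +
        ∑ u, if vmapS₂ g₁ g₂ u = v then g₂.excess (fun a => f (.inr a)) u else 0 := by
  rw [sum_ite_map_excess, sum_ite_map_excess, excess_eq_sum_ite, sum_arcs_series,
    sum_arcs_series]
  exact add_sub_add_comm _ _ _ _

lemma excess_parallel (f : (parallel g₁ g₂).Arcs → ℤ) (v : (parallel g₁ g₂).Vert) :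
    (parallel g₁ g₂).excess f v =
      (∑ u, if vmapP₁ g₁ g₂ u = v then g₁.excess (fun a => f (.inl a)) u else 0) +
        ∑ u, if vmapP₂ g₁ g₂ u = v then g₂.excess (fun a => f (.inr a)) u else 0 := by
  rw [sum_ite_map_excess, sum_ite_map_excess, excess_eq_sum_ite, sum_arcs_parallel,
    sum_arcs_parallel]
  exact add_sub_add_comm _ _ _ _

lemma excess_series_vmapS₁_inl (f : (series g₁ g₂).Arcs → ℤ) (x : g₁.Inner) :
    (series g₁ g₂).excess f (vmapS₁ g₁ g₂ (.inl x)) =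
      g₁.excess (fun a => f (.inl a)) (.inl x) := by
  rw [excess_series, sum_ite_apply_eq_of_injective (vmapS₁_injective g₁ g₂) _ (.inl _),
    sum_ite_eq_zero_of_forall_ne (by rintro (_ | _ | _) h <;> cases h), add_zero]

lemma excess_series_vmapS₂_inl (f : (series g₁ g₂).Arcs → ℤ) (y : g₂.Inner) :
    (series g₁ g₂).excess f (vmapS₂ g₁ g₂ (.inl y)) =
      g₂.excess (fun a => f (.inr a)) (.inl y) := by
  rw [excess_series, sum_ite_apply_eq_of_injective (vmapS₂_injective g₁ g₂) _ (.inl _),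
    sum_ite_eq_zero_of_forall_ne (by rintro (_ | _ | _) h <;> cases h), zero_add]

lemma excess_series_origin (f : (series g₁ g₂).Arcs → ℤ) :
    (series g₁ g₂).excess f (series g₁ g₂).origin =
      g₁.excess (fun a => f (.inl a)) g₁.origin := by
  rw [show (series g₁ g₂).origin = vmapS₁ g₁ g₂ g₁.origin from rfl, excess_series,
    sum_ite_apply_eq_of_injective (vmapS₁_injective g₁ g₂),
    sum_ite_eq_zero_of_forall_ne (by rintro (_ | _ | _) h <;> cases h), add_zero]

lemma excess_series_junction (f : (series g₁ g₂).Arcs → ℤ) :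
    (series g₁ g₂).excess f (vmapS₁ g₁ g₂ g₁.target) =
      g₁.excess (fun a => f (.inl a)) g₁.target + g₂.excess (fun a => f (.inr a)) g₂.origin := by
  rw [excess_series, sum_ite_apply_eq_of_injective (vmapS₁_injective g₁ g₂),
    show vmapS₁ g₁ g₂ g₁.target = vmapS₂ g₁ g₂ g₂.origin from rfl,
    sum_ite_apply_eq_of_injective (vmapS₂_injective g₁ g₂)]

lemma excess_parallel_vmapP₁_inl (f : (parallel g₁ g₂).Arcs → ℤ) (x : g₁.Inner) :
    (parallel g₁ g₂).excess f (vmapP₁ g₁ g₂ (.inl x)) =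
      g₁.excess (fun a => f (.inl a)) (.inl x) := by
  rw [excess_parallel, sum_ite_apply_eq_of_injective (vmapP₁_injective g₁ g₂) _ (.inl _),
    sum_ite_eq_zero_of_forall_ne (by rintro (_ | _) h <;> cases h), add_zero]

lemma excess_parallel_vmapP₂_inl (f : (parallel g₁ g₂).Arcs → ℤ) (y : g₂.Inner) :
    (parallel g₁ g₂).excess f (vmapP₂ g₁ g₂ (.inl y)) =
      g₂.excess (fun a => f (.inr a)) (.inl y) := by
  rw [excess_parallel, sum_ite_apply_eq_of_injective (vmapP₂_injective g₁ g₂) _ (.inl _),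
    sum_ite_eq_zero_of_forall_ne (by rintro (_ | _) h <;> cases h), zero_add]

lemma excess_parallel_origin (f : (parallel g₁ g₂).Arcs → ℤ) :
    (parallel g₁ g₂).excess f (parallel g₁ g₂).origin =
      g₁.excess (fun a => f (.inl a)) g₁.origin + g₂.excess (fun a => f (.inr a)) g₂.origin := by
  rw [show (parallel g₁ g₂).origin = vmapP₁ g₁ g₂ g₁.origin from rfl, excess_parallel,
    sum_ite_apply_eq_of_injective (vmapP₁_injective g₁ g₂),
    show vmapP₁ g₁ g₂ g₁.origin = vmapP₂ g₁ g₂ g₂.origin from rfl,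
    sum_ite_apply_eq_of_injective (vmapP₂_injective g₁ g₂)]

end Excess

section Flows

lemma bal_inl (g : SPD) (d : ℤ) (x : g.Inner) : g.bal d (.inl x) = 0 := by
  simp [bal, origin, target]

lemma bal_origin (g : SPD) (d : ℤ) : g.bal d g.origin = d :=
  if_pos rfl

lemma bal_target (g : SPD) (d : ℤ) : g.bal d g.target = -d := by
  rw [bal, if_neg nofun, if_pos rfl]

lemma IsFlow.excess_target {g : SPD} {d : ℤ} {f : g.Arcs → ℤ} (hf : g.IsFlow (g.bal d) f) :
    g.excess f g.target = -d :=
  (hf.2 _).trans (bal_target g d)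

lemma isFlow_bal_iff (g : SPD) (d : ℤ) (f : g.Arcs → ℤ) :
    g.IsFlow (g.bal d) f ↔ (∀ a, 0 ≤ f a ∧ f a ≤ g.cap a) ∧
      (∀ x, g.excess f (.inl x) = 0) ∧ g.excess f g.origin = d := by
  refine ⟨fun hf => ⟨hf.1, fun x => (hf.2 _).trans (bal_inl g d x),
    (hf.2 _).trans (bal_origin g d)⟩, fun ⟨hcap, hinner, horigin⟩ => ⟨hcap, ?_⟩⟩
  have htarget : g.excess f g.target = -d := by
    have := sum_excess_eq_zero g f
    rw [sum_vert, horigin] at this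
    simp only [hinner, sum_const_zero] at this
    omega
  rintro (x | _ | _)
  · exact (hinner x).trans (bal_inl g d x).symm
  · exact horigin.trans (bal_origin g d).symm
  · exact htarget.trans (bal_target g d).symm

lemma isFlow_arc_iff (b : Bool) (u c d : ℤ) (f : (arc b u c).Arcs → ℤ) :
    (arc b u c).IsFlow ((arc b u c).bal d) f ↔ (0 ≤ f () ∧ f () ≤ u) ∧ f () = d := by
  have horigin : (arc b u c).excess f (arc b u c).origin = f () := by
    rw [excess_eq_sum_ite, sum_arcs_arc, sum_arcs_arc]
    exact (congrArg₂ (· - ·) (if_pos rfl) (if_neg nofun)).trans (sub_zero _)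
  rw [isFlow_bal_iff, horigin]
  exact ⟨fun ⟨hcap, _, hd⟩ => ⟨hcap (), hd⟩, fun ⟨hcap, hd⟩ => ⟨fun _ => hcap, nofun, hd⟩⟩

variable (g₁ g₂ : SPD)

lemma isFlow_series_iff (d : ℤ) (f : (series g₁ g₂).Arcs → ℤ) :
    (series g₁ g₂).IsFlow ((series g₁ g₂).bal d) f ↔
      g₁.IsFlow (g₁.bal d) (fun a => f (.inl a)) ∧ g₂.IsFlow (g₂.bal d) (fun a => f (.inr a)) := by
  have hinner : (∀ w, (series g₁ g₂).excess f (.inl w) = 0) ↔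
      (∀ x, g₁.excess (fun a => f (.inl a)) (.inl x) = 0) ∧
        (∀ y, g₂.excess (fun a => f (.inr a)) (.inl y) = 0) ∧
        g₁.excess (fun a => f (.inl a)) g₁.target +
          g₂.excess (fun a => f (.inr a)) g₂.origin = 0 := by
    simp only [← excess_series_vmapS₁_inl, ← excess_series_vmapS₂_inl, ← excess_series_junction]
    exact ⟨fun h => ⟨fun x => h _, fun y => h _, h _⟩,
      fun ⟨h₁, h₂, h₃⟩ => by rintro ((x | y) | ⟨⟩); exacts [h₁ x, h₂ y, h₃]⟩
  rw [isFlow_bal_iff, hinner, excess_series_origin]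
  constructor
  · rintro ⟨hcap, ⟨h₁, h₂, h₃⟩, horigin⟩
    have hf₁ : g₁.IsFlow (g₁.bal d) (fun a => f (.inl a)) :=
      (isFlow_bal_iff _ _ _).2 ⟨fun a => hcap (.inl a), h₁, horigin⟩
    refine ⟨hf₁, (isFlow_bal_iff _ _ _).2 ⟨fun a => hcap (.inr a), h₂, ?_⟩⟩
    linarith [hf₁.excess_target]
  · rintro ⟨hf₁, hf₂⟩
    obtain ⟨hcap₁, hinner₁, horigin₁⟩ := (isFlow_bal_iff _ _ _).1 hf₁
    obtain ⟨hcap₂, hinner₂, horigin₂⟩ := (isFlow_bal_iff _ _ _).1 hf₂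
    refine ⟨?_, ⟨hinner₁, hinner₂, by rw [hf₁.excess_target, horigin₂, neg_add_cancel]⟩,
      horigin₁⟩
    rintro (a | a)
    exacts [hcap₁ a, hcap₂ a]

lemma isFlow_parallel_iff (d : ℤ) (f : (parallel g₁ g₂).Arcs → ℤ) :
    (parallel g₁ g₂).IsFlow ((parallel g₁ g₂).bal d) f ↔ ∃ s t, s + t = d ∧
      g₁.IsFlow (g₁.bal s) (fun a => f (.inl a)) ∧ g₂.IsFlow (g₂.bal t) (fun a => f (.inr a)) := by
  have hinner : (∀ w, (parallel g₁ g₂).excess f (.inl w) = 0) ↔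
      (∀ x, g₁.excess (fun a => f (.inl a)) (.inl x) = 0) ∧
        (∀ y, g₂.excess (fun a => f (.inr a)) (.inl y) = 0) := by
    simp only [← excess_parallel_vmapP₁_inl, ← excess_parallel_vmapP₂_inl]
    exact ⟨fun h => ⟨fun x => h _, fun y => h _⟩,
      fun ⟨h₁, h₂⟩ => by rintro (x | y); exacts [h₁ x, h₂ y]⟩
  rw [isFlow_bal_iff, hinner, excess_parallel_origin]
  constructor
  · rintro ⟨hcap, ⟨h₁, h₂⟩, horigin⟩
    exact ⟨_, _, horigin, (isFlow_bal_iff _ _ _).2 ⟨fun a => hcap (.inl a), h₁, rfl⟩,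
      (isFlow_bal_iff _ _ _).2 ⟨fun a => hcap (.inr a), h₂, rfl⟩⟩
  · rintro ⟨s, t, hst, hf₁, hf₂⟩
    obtain ⟨hcap₁, hinner₁, horigin₁⟩ := (isFlow_bal_iff _ _ _).1 hf₁
    obtain ⟨hcap₂, hinner₂, horigin₂⟩ := (isFlow_bal_iff _ _ _).1 hf₂
    refine ⟨?_, ⟨hinner₁, hinner₂⟩, by rw [horigin₁, horigin₂, hst]⟩
    rintro (a | a)
    exacts [hcap₁ a, hcap₂ a]

end Flows

def AgreeOnFixed (g : SPD) (f h : g.Arcs → ℤ) : Prop :=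
  ∀ a, g.fixedArc a = true → f a = h a

theorem exists_isFlow_le (g : SPD) {d D e : ℤ} {f h : g.Arcs → ℤ}
    (hf : g.IsFlow (g.bal D) f) (hh : g.IsFlow (g.bal d) h) (hhf : g.AgreeOnFixed h f)
    (hle : min d D ≤ e) (hge : e ≤ D) :
    ∃ k, g.IsFlow (g.bal e) k ∧ k ≤ f ∧ g.AgreeOnFixed k f := by
  induction g generalizing d D e with
  | arc b u c =>
    rw [isFlow_arc_iff] at hf hh
    cases b with
    | true =>
      have : d = D := by rw [← hf.2, ← hh.2, hhf () rfl]
      exact ⟨f, (isFlow_arc_iff ..).2 ⟨hf.1, by omega⟩, le_rfl, fun _ _ => rfl⟩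
    | false =>
      refine ⟨fun _ => e, (isFlow_arc_iff ..).2 ⟨⟨by omega, by omega⟩, rfl⟩, fun _ => ?_, nofun⟩
      show e ≤ f ()
      omega
  | series g₁ g₂ ih₁ ih₂ =>
    rw [isFlow_series_iff] at hf hh
    obtain ⟨k₁, hk₁, hk₁f, hk₁fix⟩ := ih₁ hf.1 hh.1 (fun a => hhf (.inl a)) hle hge
    obtain ⟨k₂, hk₂, hk₂f, hk₂fix⟩ := ih₂ hf.2 hh.2 (fun a => hhf (.inr a)) hle hge
    refine ⟨Sum.elim k₁ k₂, (isFlow_series_iff ..).2 ⟨hk₁, hk₂⟩, ?_, ?_⟩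
    · rintro (a | a)
      exacts [hk₁f a, hk₂f a]
    · rintro (a | a)
      exacts [hk₁fix a, hk₂fix a]
  | parallel g₁ g₂ ih₁ ih₂ =>
    obtain ⟨S, T, hST, hf₁, hf₂⟩ := (isFlow_parallel_iff ..).1 hf
    obtain ⟨s, t, hst, hh₁, hh₂⟩ := (isFlow_parallel_iff ..).1 hh
    -- The first branch gets the least share `x` allowed by its own lower bound and `e - x ≤ T`.
    obtain ⟨k₁, hk₁, hk₁f, hk₁fix⟩ := ih₁ (e := max (min s S) (e - T)) hf₁ hh₁
      (fun a => hhf (.inl a)) (by omega) (by omega)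
    obtain ⟨k₂, hk₂, hk₂f, hk₂fix⟩ := ih₂ (e := e - max (min s S) (e - T)) hf₂ hh₂
      (fun a => hhf (.inr a)) (by omega) (by omega)
    refine ⟨Sum.elim k₁ k₂, (isFlow_parallel_iff ..).2 ⟨_, _, by omega, hk₁, hk₂⟩, ?_, ?_⟩
    · rintro (a | a)
      exacts [hk₁f a, hk₂f a]
    · rintro (a | a)
      exacts [hk₁fix a, hk₂fix a]

theorem exists_optimal (g : SPD) (d₁ d₂ : ℤ) (hfeas : ∃ f₁ f₂, g.IsRobust2 d₁ d₂ f₁ f₂) :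
    ∃ f₁ f₂, g.Optimal d₁ d₂ f₁ f₂ := by
  have hbox : (Set.univ.pi fun a => Set.Icc 0 (g.cap a)).Finite :=
    Set.Finite.pi fun a => Set.finite_Icc _ _
  have hfin : {p : (g.Arcs → ℤ) × (g.Arcs → ℤ) | g.IsRobust2 d₁ d₂ p.1 p.2}.Finite :=
    (hbox.prod hbox).subset fun p hp => ⟨fun a _ => hp.1.1 a, fun a _ => hp.2.1.1 a⟩
  obtain ⟨f₁, f₂, hf⟩ := hfeas
  obtain ⟨p, hp, hmin⟩ := Set.exists_min_image _ (fun p => g.rcost p.1 p.2) hfin ⟨(f₁, f₂), hf⟩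
  exact ⟨p.1, p.2, hp, fun h₁ h₂ hh => hmin (h₁, h₂) hh⟩

theorem flowCost_mono (g : SPD) (hcost : ∀ a, 0 ≤ g.cost a) {f h : g.Arcs → ℤ} (hfh : f ≤ h) :
    g.flowCost f ≤ g.flowCost h :=
  sum_le_sum fun a _ => mul_le_mul_of_nonneg_left (hfh a) (hcost a)

end SPD

theorem cost_attained_in_second_scenario_general (g : SPD) (hg : g.nonnegData)
    (d₁ d₂ : ℤ) (hd : d₁ ≤ d₂)
    (hfeas : ∃ f₁ f₂, g.IsRobust2 d₁ d₂ f₁ f₂) :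
    ∃ f₁ f₂, g.Optimal d₁ d₂ f₁ f₂ ∧ g.rcost f₁ f₂ = g.flowCost f₂ := by
  obtain ⟨f₁, f₂, ⟨hf₁, hf₂, hfix⟩, hmin⟩ := g.exists_optimal d₁ d₂ hfeas
  obtain ⟨k, hk, hkf₂, hkfix⟩ := g.exists_isFlow_le hf₂ hf₁ hfix (min_le_left _ _) hd
  have hcost : g.rcost k f₂ = g.flowCost f₂ :=
    max_eq_right (g.flowCost_mono (fun a => (hg a).2) hkf₂)
  refine ⟨k, f₂, ⟨⟨hk, hf₂, hkfix⟩, fun h₁ h₂ hh => ?_⟩, hcost⟩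
  calc g.rcost k f₂ = g.flowCost f₂ := hcost
    _ ≤ g.rcost f₁ f₂ := le_max_right _ _
    _ ≤ g.rcost h₁ h₂ := hmin h₁ h₂ hh

/-- Lemma 11 of the paper: for a two-scenario instance on an SP digraph
with unique source at the origin, unique sink at the target, and demands `d₁ ≤ d₂`, if
a robust flow exists then there exists an optimal integral robust flow whose cost is
attained by the larger-demand scenario: `c(f) = max {c(f₁), c(f₂)} = c(f₂)`. -/
theorem cost_attained_in_second_scenario (g : SPD) (hg : g.nonnegData)
    (d₁ d₂ : ℤ) (hd₀ : 0 ≤ d₁) (hd : d₁ ≤ d₂)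
    (hfeas : ∃ f₁ f₂, g.IsRobust2 d₁ d₂ f₁ f₂) :
    ∃ f₁ f₂, g.Optimal d₁ d₂ f₁ f₂ ∧ g.rcost f₁ f₂ = g.flowCost f₂ :=
  cost_attained_in_second_scenario_general g hg d₁ d₂ hd hfeas
end
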